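/- If σ : I^{n+1} → G satisfies f_i^- σ = (f_i^+ σ) ∘ T_j T_{j,m} with i < j < m, then all four faces f_j^- σ, f_j^+ σ, f_m^- σ, f_m^+ σ are non-injective on vertices. -/

import Mathlib

/-- The discrete `n`-cube graph on `{0,1}^n`: two vertices are adjacent iff they
differ in exactly one coordinate. -/
def Cube (n : ℕ) : SimpleGraph (Fin n → Bool) where
  Adj x y := ∃! i, x i ≠ y i
  symm := ⟨by
    rintro x y ⟨i, hi, hu⟩
    exact ⟨i, hi.symm, fun j hj => hu j hj.symm⟩⟩
  loopless := ⟨by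
    rintro x ⟨i, hi, -⟩
    exact hi rfl⟩

/-- A graph map sends each edge to an edge or to a vertex. -/
def IsGraphMap {V W : Type*} (G : SimpleGraph V) (H : SimpleGraph W) (f : V → W) : Prop :=
  ∀ ⦃u v⦄, G.Adj u v → H.Adj (f u) (f v) ∨ f u = f v

/-- The face of a singular cube obtained by fixing the `i`-th coordinate to `b`
(`b = false` gives the front face `f_i^-`, `b = true` the back face `f_i^+`). -/
def face {V : Type*} {n : ℕ} (i : Fin (n + 1)) (b : Bool)
    (σ : (Fin (n + 1) → Bool) → V) : (Fin n → Bool) → V :=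
  fun t => σ (i.insertNth b t)

/-- The reflection `T_i` of the discrete cube, flipping the `i`-th coordinate. -/
def reflT {n : ℕ} (i : Fin n) (t : Fin n → Bool) : Fin n → Bool :=
  Function.update t i (!t i)

/-- The transposition `T_{i,j}` of the discrete cube, swapping coordinates `i` and `j`. -/
def swapT {n : ℕ} (i j : Fin n) (t : Fin n → Bool) : Fin n → Bool :=
  t ∘ Equiv.swap i j

/-- A singular cube is degenerate iff it does not depend on some coordinate,
equivalently some pair of opposite faces `f_i^- σ = f_i^+ σ` agree. -/
def IsDegenerate {V : Type*} {m : ℕ} (τ : (Fin m → Bool) → V) : Prop :=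
  ∃ i : Fin m, ∀ t, τ t = τ (reflT i t)

section

open Function

variable {V : Type*} {n : ℕ}

@[simp]
lemma reflT_swapT_apply_left (q r : Fin n) (s : Fin n → Bool) :
    reflT q (swapT q r s) q = !s r := by
  simp [reflT, swapT]

@[simp]
lemma reflT_swapT_apply_right {q r : Fin n} (hqr : q ≠ r) (s : Fin n → Bool) :
    reflT q (swapT q r s) r = s q := by
  simp [reflT, swapT, hqr.symm]

lemma not_injective_face_of_map_eq {σ : (Fin (n + 1) → Bool) → V} {k : Fin (n + 1)} {c : Bool}
    {x y : Fin (n + 1) → Bool} (hx : x k = c) (hy : y k = c) (hxy : x ≠ y) (h : σ x = σ y) :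
    ¬ Injective (face k c σ) := by
  intro hinj
  have hx' : k.insertNth c (k.removeNth x) = x := hx ▸ Fin.insertNth_self_removeNth k x
  have hy' : k.insertNth c (k.removeNth y) = y := hy ▸ Fin.insertNth_self_removeNth k y
  have hface : face k c σ (k.removeNth x) = face k c σ (k.removeNth y) := by
    simp only [face, hx', hy', h]
  exact hxy (by rw [← hx', ← hy', hinj hface])

/-- The identity `f_p^- σ = (f_p^+ σ) ∘ T_q T_{q,r}` identifies the point with coordinates
`(p, q, r) = (0, a, b)` with the point `(1, ¬b, a)`; taking `a = c, b = ¬c` gives two points on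
the face `q = c`, and `a = b = c` two points on the face `r = c`. -/
theorem not_injective_faces_of_face_eq_comp_rotation {σ : (Fin (n + 1) → Bool) → V}
    {p : Fin (n + 1)} {q r : Fin n} (hqr : q ≠ r)
    (hrot : face p false σ = face p true σ ∘ fun t => reflT q (swapT q r t)) (c : Bool) :
    ¬ Injective (face (p.succAbove q) c σ) ∧ ¬ Injective (face (p.succAbove r) c σ) := by
  have hne : ∀ s t : Fin n → Bool,
      Fin.insertNth (α := fun _ => Bool) p false s ≠ p.insertNth true t :=
    fun s t h => by simpa using congrFun h p
  constructor
  · let s := update (fun _ => c) r (!c)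
    exact not_injective_face_of_map_eq (by simp [s, hqr]) (by simp [s]) (hne _ _) (congrFun hrot s)
  · let s : Fin n → Bool := fun _ => c
    exact not_injective_face_of_map_eq (by simp [s]) (by simp [s, hqr]) (hne _ _) (congrFun hrot s)

lemma Fin.succAbove_mk_pred_of_lt {i k : ℕ} (hik : i < k) (hk : k < n + 1) :
    (⟨i, by omega⟩ : Fin (n + 1)).succAbove ⟨k - 1, by omega⟩ = ⟨k, hk⟩ := by
  rw [Fin.succAbove_of_le_castSucc _ _ (by simp only [Fin.le_def, Fin.val_castSucc]; omega)]
  ext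
  simp only [Fin.val_succ]
  omega

end

/-- if opposite faces of `σ` satisfy `f_i^- σ = (f_i^+ σ) ∘ T_j T_{j,m}`
for `i < j < m`, then the four faces `f_j^± σ` and `f_m^± σ` are non-injective. -/
theorem rotation_forces_noninjective_faces {V : Type*} {n : ℕ}
    (i j m : ℕ) (hij : i < j) (hjm : j < m) (hm : m < n + 3)
    (σ : (Fin (n + 3) → Bool) → V)
    (hrot : face (⟨i, by omega⟩ : Fin (n + 3)) false σ =
      (face (⟨i, by omega⟩ : Fin (n + 3)) true σ) ∘
        (fun t : Fin (n + 2) → Bool =>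
          reflT (⟨j - 1, by omega⟩ : Fin (n + 2))
            (swapT (⟨j - 1, by omega⟩ : Fin (n + 2)) (⟨m - 1, by omega⟩ : Fin (n + 2)) t))) :
    ∀ c : Bool,
      ¬ Function.Injective (face (⟨j, by omega⟩ : Fin (n + 3)) c σ) ∧
      ¬ Function.Injective (face (⟨m, hm⟩ : Fin (n + 3)) c σ) := by
  intro c
  have hqr : (⟨j - 1, by omega⟩ : Fin (n + 2)) ≠ ⟨m - 1, by omega⟩ := by
    simp only [ne_eq, Fin.mk.injEq]; omega
  have h := not_injective_faces_of_face_eq_comp_rotation hqr hrot c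
  rwa [Fin.succAbove_mk_pred_of_lt (n := n + 2) hij,
    Fin.succAbove_mk_pred_of_lt (n := n + 2) (hij.trans hjm)] at h
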